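/- Let R be a commutative ring and A, B, C, D be m×m matrices over R such that AB = BA, BC = CB, and AD = DA. Then the determinant of the block matrix [[A, B], [C, D]] equals det(DA − BC). -/

import Mathlib

/-!
Right multiplication by `[[1, -B], [0, A]]` turns `[[A, B], [C, D]]` into the block lower
triangular `[[A, 0], [C, DA - CB]]` as soon as `A` and `B` commute, so
`det [[A, B], [C, D]] * det A = det (DA - CB) * det A`. To cancel `det A`, replace `A` by the
generic `X + A` over `R[X]`: its determinant is a monic polynomial, hence a non-zero-divisor, and
setting `X = 0` afterwards recovers the identity over `R`.
-/

open Polynomial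

namespace Matrix

variable {n R : Type*} [Fintype n] [DecidableEq n] [CommRing R]

theorem det_fromBlocks_mul_det_of_commute {A B : Matrix n n R} (hAB : Commute A B)
    (C D : Matrix n n R) :
    (fromBlocks A B C D).det * A.det = (D * A - C * B).det * A.det := by
  have h : fromBlocks A B C D * fromBlocks 1 (-B) 0 A = fromBlocks A 0 C (D * A - C * B) := by
    simp [fromBlocks_multiply, hAB.eq, sub_eq_neg_add]
  calc (fromBlocks A B C D).det * A.det
      = (fromBlocks A B C D * fromBlocks 1 (-B) 0 A).det := by
        rw [det_mul, det_fromBlocks_zero₂₁, det_one, one_mul]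
    _ = (D * A - C * B).det * A.det := by rw [h, det_fromBlocks_zero₁₂, mul_comm]

theorem charmatrix_map_eval_zero (M : Matrix n n R) :
    M.charmatrix.map (eval 0) = -M := by
  ext i j
  by_cases hij : i = j
  · subst hij
    simp
  · simp [hij]

theorem det_fromBlocks_of_commute {A B : Matrix n n R} (hAB : Commute A B) (C D : Matrix n n R) :
    (fromBlocks A B C D).det = (D * A - C * B).det := by
  have hcomm : Commute (-A).charmatrix (B.map Polynomial.C) :=
    (scalar_commute X (Commute.all X) _).sub_left (hAB.neg_left.map Polynomial.C.mapMatrix)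
  have hpoly := (charpoly_monic (-A)).isRegular.right <|
    det_fromBlocks_mul_det_of_commute hcomm (C.map Polynomial.C) (D.map Polynomial.C)
  have heval := congrArg (evalRingHom 0) hpoly
  rw [RingHom.map_det, RingHom.map_det, map_sub, map_mul, map_mul] at heval
  simpa only [RingHom.mapMatrix_apply, fromBlocks_map, charmatrix_map_eval_zero, neg_neg,
    Matrix.map_map, coe_evalRingHom, eval_C, Function.comp_def, map_id'] using heval

end Matrix

theorem det_fromBlocks_of_comm_AB_BC_AD_general {R : Type*} [CommRing R] {m : ℕ}
    (A B C D : Matrix (Fin m) (Fin m) R) (h1 : A * B = B * A) (h2 : B * C = C * B) :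
    (Matrix.fromBlocks A B C D).det = (D * A - B * C).det := by
  rw [Matrix.det_fromBlocks_of_commute h1 C D, h2]

theorem det_fromBlocks_of_comm_AB_BC_AD {R : Type*} [CommRing R] {m : ℕ}
    (A B C D : Matrix (Fin m) (Fin m) R) (h1 : A * B = B * A) (h2 : B * C = C * B) (h3 : A * D = D * A) :
    (Matrix.fromBlocks A B C D).det = (D * A - B * C).det :=
  det_fromBlocks_of_comm_AB_BC_AD_general A B C D h1 h2
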